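/- arXiv:math/0304387 — 5 statements merged into one kernel-verified Lean document; each statement's English description precedes it below -/
import Mathlib

section
/- Let n ≥ 1 and let a_1,...,a_n ≥ 0 be real numbers with ∑ a_j = n. Then there exists an orthonormal basis v_1,...,v_n of ℝ^n such that each v_j lies on the ellipsoid {x ∈ ℝ^n : ∑ a_j x_j² = 1}. -/
/-! Given an orthonormal family `e` with `∑ Q (e i) = 0`, pick `Q (e p) ≤ 0 ≤ Q (e q)`.
Rotating the pair `(e p, e q)` in its plane preserves `Q (e p) + Q (e q)`, and by the intermediate
value theorem some rotation angle makes the first vector `Q`-isotropic. The other vectors of the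
rotated family are orthogonal to it and still have `Q`-sum zero, so induction applies to them.
The ellipsoid is the case `Q x = ∑ (aᵢ - 1) xᵢ²`, whose sum over the standard basis is
`∑ aᵢ - n = 0`. -/

open Real Matrix RealInnerProductSpace Submodule

namespace QuadraticMap

theorem map_rotate_add_map_rotate {R M N : Type*} [CommRing R] [AddCommGroup M] [Module R M]
    [AddCommGroup N] [Module R N] (Q : QuadraticMap R M N) (x y : M) {c s : R}
    (hcs : c ^ 2 + s ^ 2 = 1) :
    Q (c • x + s • y) + Q (-s • x + c • y) = Q x + Q y := by
  simp only [QuadraticMap.map_add Q, QuadraticMap.map_smul, polar_smul_left, polar_smul_right]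
  linear_combination (norm := module) hcs • (Q x + Q y)

theorem exists_map_cos_smul_add_sin_smul_eq_zero {M : Type*} [AddCommGroup M] [Module ℝ M]
    (Q : QuadraticForm ℝ M) {x y : M} (hx : Q x ≤ 0) (hy : 0 ≤ Q y) :
    ∃ θ : ℝ, Q (cos θ • x + sin θ • y) = 0 := by
  have hQ : (fun θ => Q (cos θ • x + sin θ • y)) =
      fun θ => cos θ ^ 2 * Q x + sin θ ^ 2 * Q y + cos θ * sin θ * polar Q x y := by
    ext θ
    simp only [QuadraticMap.map_add Q, QuadraticMap.map_smul, polar_smul_left, polar_smul_right,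
      smul_eq_mul]
    ring
  obtain ⟨θ, -, hθ⟩ := intermediate_value_Icc pi_div_two_pos.le
    (hQ ▸ by fun_prop : Continuous fun θ => Q (cos θ • x + sin θ • y)).continuousOn
    (show (0 : ℝ) ∈ Set.Icc _ _ by simpa using ⟨hx, hy⟩)
  exact ⟨θ, hθ⟩

end QuadraticMap

theorem exists_ne_nonpos_nonneg_of_sum_eq_zero {ι M : Type*} [Fintype ι] [Nontrivial ι]
    [AddCommGroup M] [LinearOrder M] [IsOrderedAddMonoid M] {f : ι → M} (hf : ∑ i, f i = 0) :
    ∃ p q, p ≠ q ∧ f p ≤ 0 ∧ 0 ≤ f q := by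
  by_cases hneg : ∃ p, f p < 0
  · obtain ⟨p, hp⟩ := hneg
    obtain ⟨q, hq⟩ : ∃ q, 0 ≤ f q := by
      by_contra! h
      exact (Finset.sum_neg (fun i _ => h i) Finset.univ_nonempty).ne hf
    exact ⟨p, q, fun h => (hp.trans_le (h ▸ hq)).false, hp.le, hq⟩
  · simp only [not_exists, not_lt] at hneg
    obtain ⟨p, q, hpq⟩ := exists_pair_ne ι
    exact ⟨p, q, hpq, ((Fintype.sum_eq_zero_iff_of_nonneg hneg).1 hf ▸ le_rfl), hneg q⟩

theorem Equiv.Perm.exists_apply_eq_and_apply_eq {α : Type*} [DecidableEq α] {a b p q : α}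
    (hab : a ≠ b) (hpq : p ≠ q) : ∃ σ : Equiv.Perm α, σ a = p ∧ σ b = q := by
  have hq : Equiv.swap a p q ≠ a := by
    rwa [Ne, Equiv.swap_apply_eq_iff, Equiv.swap_apply_left, eq_comm]
  refine ⟨Equiv.swap a p * Equiv.swap b (Equiv.swap a p q), ?_, ?_⟩
  · simp [Equiv.swap_apply_of_ne_of_ne hab hq.symm]
  · simp

variable {E : Type*} [NormedAddCommGroup E] [InnerProductSpace ℝ E]

theorem Orthonormal.vecCons_rotate {n : ℕ} {x y : E} {r : Fin n → E}
    (h : Orthonormal ℝ (vecCons x (vecCons y r))) {c s : ℝ} (hcs : c ^ 2 + s ^ 2 = 1) :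
    Orthonormal ℝ (vecCons (c • x + s • y) (vecCons (-s • x + c • y) r)) := by
  simp only [orthonormal_vecCons_iff, Fin.forall_fin_succ, cons_val_zero, cons_val_succ] at h ⊢
  obtain ⟨hx, ⟨hxy, hxr⟩, hy, hyr, hr⟩ := h
  have hyx : ⟪y, x⟫ = 0 := by rw [real_inner_comm, hxy]
  have hxx : ⟪x, x⟫ = 1 := by rw [real_inner_self_eq_norm_sq, hx, one_pow]
  have hyy : ⟪y, y⟫ = 1 := by rw [real_inner_self_eq_norm_sq, hy, one_pow]
  have unit : ∀ a b : ℝ, a ^ 2 + b ^ 2 = 1 → ‖a • x + b • y‖ = 1 := fun a b hab => by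
    rw [← pow_left_inj₀ (norm_nonneg _) zero_le_one two_ne_zero, one_pow,
      ← real_inner_self_eq_norm_sq]
    simp only [inner_add_left, inner_add_right, real_inner_smul_left, real_inner_smul_right,
      hxx, hyy, hxy, hyx]
    linear_combination hab
  refine ⟨unit c s hcs, ⟨?_, fun i => ?_⟩, unit (-s) c (by linear_combination hcs),
    fun i => ?_, hr⟩
  · simp only [inner_add_left, inner_add_right, real_inner_smul_left, real_inner_smul_right,
      hxx, hyy, hxy, hyx]
    ring
  all_goals simp [inner_add_left, real_inner_smul_left, hxr i, hyr i]

theorem Orthonormal.exists_vecCons_isotropic (Q : QuadraticForm ℝ E) {n : ℕ}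
    {e : Fin (n + 1) → E} (he : Orthonormal ℝ e) (hQe : ∑ i, Q (e i) = 0) :
    ∃ (v : E) (r : Fin n → E), Orthonormal ℝ (vecCons v r) ∧
      v ∈ span ℝ (Set.range e) ∧ (∀ i, r i ∈ span ℝ (Set.range e)) ∧
      Q v = 0 ∧ ∑ i, Q (r i) = 0 := by
  cases n with
  | zero =>
    refine ⟨e 0, Fin.tail e, Fin.cons_self_tail e ▸ he, subset_span ⟨0, rfl⟩, finZeroElim,
      by simpa using hQe, by simp⟩
  | succ n =>
    obtain ⟨p, q, hpq, hp, hq⟩ := exists_ne_nonpos_nonneg_of_sum_eq_zero hQe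
    obtain ⟨σ, hσp, hσq⟩ := Equiv.Perm.exists_apply_eq_and_apply_eq Fin.zero_ne_one hpq
    obtain ⟨t, hf⟩ : ∃ t, e ∘ σ = vecCons (e p) (vecCons (e q) t) := by
      refine ⟨Fin.tail (Fin.tail (e ∘ σ)), ?_⟩
      rw [← hσp, ← hσq]
      ext i
      exact Fin.cases rfl (Fin.cases rfl fun _ => rfl) i
    have hfo : Orthonormal ℝ (e ∘ σ) := he.comp σ σ.injective
    rw [hf] at hfo
    have hpair : ∀ a b : ℝ, a • e p + b • e q ∈ span ℝ (Set.range e) := fun a b =>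
      add_mem (smul_mem _ _ (subset_span ⟨p, rfl⟩)) (smul_mem _ _ (subset_span ⟨q, rfl⟩))
    obtain ⟨θ, hθ⟩ := Q.exists_map_cos_smul_add_sin_smul_eq_zero hp hq
    have ht : ∀ i, t i ∈ span ℝ (Set.range e) := fun i =>
      (show e (σ i.succ.succ) = t i from congrFun hf _) ▸ subset_span ⟨σ i.succ.succ, rfl⟩
    refine ⟨cos θ • e p + sin θ • e q, vecCons (-sin θ • e p + cos θ • e q) t,
      hfo.vecCons_rotate (cos_sq_add_sin_sq θ), hpair _ _, Fin.cases (hpair _ _) ht, hθ, ?_⟩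
    have hQf : ∑ i, Q ((e ∘ σ) i) = 0 := (Equiv.sum_comp σ fun i => Q (e i)).trans hQe
    have hrot := Q.map_rotate_add_map_rotate (e p) (e q) (cos_sq_add_sin_sq θ)
    rw [hf] at hQf
    simp only [Fin.sum_univ_succ, cons_val_zero, cons_val_succ] at hQf ⊢
    linear_combination hQf + hrot - hθ

theorem Orthonormal.exists_orthonormal_isotropic (Q : QuadraticForm ℝ E) {n : ℕ}
    {e : Fin n → E} (he : Orthonormal ℝ e) (hQe : ∑ i, Q (e i) = 0) :
    ∃ w : Fin n → E, Orthonormal ℝ w ∧ (∀ i, w i ∈ span ℝ (Set.range e)) ∧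
      ∀ i, Q (w i) = 0 := by
  induction n with
  | zero => exact ⟨e, he, fun i => i.elim0, fun i => i.elim0⟩
  | succ n ih =>
    obtain ⟨v, r, hvr, hv, hr, hQv, hQr⟩ := he.exists_vecCons_isotropic Q hQe
    obtain ⟨hv1, hvr, hro⟩ := orthonormal_vecCons_iff.1 hvr
    obtain ⟨w, hw, hwr, hQw⟩ := ih hro hQr
    have hr_perp : span ℝ (Set.range r) ≤ (ℝ ∙ v)ᗮ :=
      span_le.2 <| Set.range_subset_iff.2 fun i =>
        mem_orthogonal_singleton_iff_inner_right.2 (hvr i)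
    refine ⟨vecCons v w, orthonormal_vecCons_iff.2 ⟨hv1, fun i => ?_, hw⟩,
      Fin.cases hv fun i => ?_, Fin.cases hQv hQw⟩
    · exact mem_orthogonal_singleton_iff_inner_right.1 (hr_perp (hwr i))
    · exact span_le.2 (Set.range_subset_iff.2 hr) (hwr i)

theorem ellipsoid_contains_orthonormal_basis_general
    (n : ℕ) (a : Fin n → ℝ)
    (hsum : ∑ j, a j = (n : ℝ)) :
    ∃ v : Fin n → EuclideanSpace ℝ (Fin n),
      Orthonormal ℝ v ∧
      Submodule.span ℝ (Set.range v) = ⊤ ∧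
      ∀ j, ∑ i, a i * (v j i) ^ 2 = 1 := by
  let Q : QuadraticForm ℝ (EuclideanSpace ℝ (Fin n)) :=
    (QuadraticMap.weightedSumSquares ℝ fun i => a i - 1).comp
      (WithLp.linearEquiv 2 ℝ _).toLinearMap
  have hQ : ∀ x, Q x = ∑ i, a i * x i ^ 2 - ‖x‖ ^ 2 := fun x => by
    rw [EuclideanSpace.norm_sq_eq]
    simp [Q, QuadraticMap.weightedSumSquares_apply, sub_mul, sq]
  have hQe : ∑ i, Q (EuclideanSpace.basisFun (Fin n) ℝ i) = 0 := by
    simp [hQ, hsum]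
  obtain ⟨w, hw, -, hQw⟩ :=
    (EuclideanSpace.basisFun (Fin n) ℝ).orthonormal.exists_orthonormal_isotropic Q hQe
  refine ⟨w, hw, hw.linearIndependent.span_eq_top_of_card_eq_finrank' (by simp), fun j => ?_⟩
  have hQwj := hQ (w j)
  rw [hQw j, hw.norm_eq_one j] at hQwj
  linarith

/-- Every ellipsoid `{x : ∑ aⱼ xⱼ² = 1}` in ℝⁿ with `∑ aⱼ = n`
contains an orthonormal basis of ℝⁿ. -/
theorem ellipsoid_contains_orthonormal_basis
    (n : ℕ) (hn : 1 ≤ n) (a : Fin n → ℝ) (ha : ∀ j, 0 ≤ a j)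
    (hsum : ∑ j, a j = (n : ℝ)) :
    ∃ v : Fin n → EuclideanSpace ℝ (Fin n),
      Orthonormal ℝ v ∧
      Submodule.span ℝ (Set.range v) = ⊤ ∧
      ∀ j, ∑ i, a i * (v j i) ^ 2 = 1 :=
  ellipsoid_contains_orthonormal_basis_general n a hsum
end

section
/- Let n ≤ k be positive integers and a_1,...,a_n ≥ 0 with r := ∑ a_j > 0. Then there exist k vectors u_1,...,u_k in the ellipsoid E = {x ∈ ℝ^n : ∑ a_j x_j² = 1} forming a tight frame for ℝ^n, i.e., there is a constant K > 0 such that for all x ∈ ℝ^n, ∑_{i=1}^k ⟨x, u_i⟩² = K‖x‖². -/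
/-!
If `L : F → ℝᵏ` is an isometric embedding and `b` an orthonormal basis of `ℝᵏ`, the vectors
`c • L* (b i)` form a tight frame of `F`, and `⟪L* (b i), S (L* (b i))⟫ = ⟪b i, T (b i)⟫` for
`T = L S L*`, which has the same trace as `S`. So it suffices to find an orthonormal basis of `ℝᵏ`
on which the diagonal entries `⟪b i, T (b i)⟫` all equal their average `trace T / k`. Take a basis
with the fewest indices where this fails. If there is one, some diagonal entry lies strictly below
the average and another strictly above; by the intermediate value theorem a unit vector `v` in the
plane of these two basis vectors has diagonal entry exactly the average, and the reflection
exchanging the first of them with `v` fixes all other basis vectors, which lowers the number of bad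
indices.
-/
open Module Real Set Finset
open scoped RealInnerProductSpace

variable {ι E F : Type*} [Fintype ι]
  [NormedAddCommGroup E] [InnerProductSpace ℝ E] [NormedAddCommGroup F] [InnerProductSpace ℝ F]

lemma exists_lt_lt_of_ne_sum_div_card {d : ι → ℝ} {l : ι}
    (hl : d l ≠ (∑ i, d i) / Fintype.card ι) :
    ∃ i j, d i < (∑ i, d i) / Fintype.card ι ∧ (∑ i, d i) / Fintype.card ι < d j := by
  set t := (∑ i, d i) / Fintype.card ι
  have : Nonempty ι := ⟨l⟩
  have hsum : ∑ i, (d i - t) = 0 := by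
    rw [sum_sub_distrib, sum_const, card_univ, nsmul_eq_mul,
      mul_div_cancel₀ _ (by positivity), sub_self]
  have hsum' : ∑ i, (t - d i) = 0 := by
    rw [sum_sub_distrib] at hsum ⊢; linarith
  obtain ⟨i, -, hi⟩ := exists_pos_of_sum_zero_of_exists_nonzero _ hsum'
    ⟨l, mem_univ _, sub_ne_zero.2 hl.symm⟩
  obtain ⟨j, -, hj⟩ := exists_pos_of_sum_zero_of_exists_nonzero _ hsum
    ⟨l, mem_univ _, sub_ne_zero.2 hl⟩
  exact ⟨i, j, sub_pos.1 hi, sub_pos.1 hj⟩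

lemma exists_inner_apply_cos_smul_add_sin_smul_eq (T : E →ₗ[ℝ] E) (x y : E) {t : ℝ}
    (ht : t ∈ uIcc ⟪x, T x⟫ ⟪y, T y⟫) :
    ∃ θ : ℝ, ⟪cos θ • x + sin θ • y, T (cos θ • x + sin θ • y)⟫ = t := by
  have hq : ∀ θ, ⟪cos θ • x + sin θ • y, T (cos θ • x + sin θ • y)⟫ =
      cos θ ^ 2 * ⟪x, T x⟫ + cos θ * sin θ * (⟪x, T y⟫ + ⟪y, T x⟫) + sin θ ^ 2 * ⟪y, T y⟫ := by
    intro θ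
    simp only [map_add, map_smul, inner_add_left, inner_add_right, real_inner_smul_left,
      real_inner_smul_right]
    ring
  simp_rw [hq]
  have hcont : Continuous fun θ : ℝ =>
      cos θ ^ 2 * ⟪x, T x⟫ + cos θ * sin θ * (⟪x, T y⟫ + ⟪y, T x⟫) + sin θ ^ 2 * ⟪y, T y⟫ := by
    fun_prop
  obtain ⟨θ, -, hθ⟩ := intermediate_value_uIcc (a := 0) (b := π / 2) hcont.continuousOn
    (by simpa using ht)
  exact ⟨θ, hθ⟩

lemma OrthonormalBasis.exists_inner_apply_eq_of_mem_uIcc (b : OrthonormalBasis ι ℝ E)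
    (T : E →ₗ[ℝ] E) {i j : ι} (hij : i ≠ j) {t : ℝ}
    (ht : t ∈ uIcc ⟪b i, T (b i)⟫ ⟪b j, T (b j)⟫) :
    ∃ b' : OrthonormalBasis ι ℝ E, ⟪b' i, T (b' i)⟫ = t ∧ ∀ l, l ≠ i → l ≠ j → b' l = b l := by
  obtain ⟨θ, hθ⟩ := exists_inner_apply_cos_smul_add_sin_smul_eq T (b i) (b j) ht
  set v := cos θ • b i + sin θ • b j
  have hv : ‖b i‖ = ‖v‖ := by
    refine (mul_self_inj (norm_nonneg _) (norm_nonneg _)).1 ?_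
    rw [norm_add_sq_eq_norm_sq_add_norm_sq_real (by simp [real_inner_smul_left,
      real_inner_smul_right, b.inner_eq_zero hij]), norm_smul, norm_smul, b.orthonormal.1,
      b.orthonormal.1]
    simp [← sq, cos_sq_add_sin_sq]
  refine ⟨b.map (Submodule.reflection (ℝ ∙ (b i - v))ᗮ), ?_, fun l hli hlj => ?_⟩
  · rw [b.map_apply, Submodule.reflection_sub hv, hθ]
  · rw [b.map_apply]
    refine Submodule.reflection_mem_subspace_eq_self ?_
    rw [Submodule.mem_orthogonal_singleton_iff_inner_right]
    simp [v, inner_sub_left, inner_add_left, real_inner_smul_left, b.inner_eq_zero, hli.symm,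
      hlj.symm]

theorem OrthonormalBasis.exists_forall_inner_apply_eq_trace_div_card
    (b₀ : OrthonormalBasis ι ℝ E) (T : E →ₗ[ℝ] E) :
    ∃ b : OrthonormalBasis ι ℝ E, ∀ i, ⟪b i, T (b i)⟫ = LinearMap.trace ℝ E T / Fintype.card ι := by
  classical
  set t := LinearMap.trace ℝ E T / Fintype.card ι
  let defect (b : OrthonormalBasis ι ℝ E) : ℕ := #{l | ⟪b l, T (b l)⟫ ≠ t}
  have : Nonempty (OrthonormalBasis ι ℝ E) := ⟨b₀⟩
  set b := Function.argmin defect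
  refine ⟨b, fun l => by_contra fun hl => ?_⟩
  have ht : t = (∑ i, ⟪b i, T (b i)⟫) / Fintype.card ι := by
    rw [← LinearMap.trace_eq_sum_inner T b]
  rw [ht] at hl
  obtain ⟨i, j, hi, hj⟩ := exists_lt_lt_of_ne_sum_div_card (d := fun i => ⟪b i, T (b i)⟫) hl
  rw [← ht] at hi hj
  obtain ⟨b', hb'i, hb'⟩ := b.exists_inner_apply_eq_of_mem_uIcc T
    (ne_of_apply_ne (fun i => ⟪b i, T (b i)⟫) (hi.trans hj).ne) (Icc_subset_uIcc ⟨hi.le, hj.le⟩)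
  refine Function.not_lt_argmin defect b' (card_lt_card ?_)
  refine (Finset.ssubset_iff_of_subset fun l hl => ?_).2
    ⟨i, by simpa using hi.ne, by simpa using hb'i⟩
  simp only [Finset.mem_filter_univ] at hl ⊢
  by_cases hli : l = i
  · exact absurd (hli ▸ hb'i) hl
  by_cases hlj : l = j
  · exact hlj ▸ hj.ne'
  rwa [← hb' l hli hlj]

def IsTightFrame (u : ι → E) (K : ℝ) : Prop :=
  ∀ x, ∑ i, ⟪x, u i⟫ ^ 2 = K * ‖x‖ ^ 2

section FiniteDimensional

variable [FiniteDimensional ℝ E] [FiniteDimensional ℝ F]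

lemma exists_linearIsometry_of_finrank_le (h : finrank ℝ F ≤ finrank ℝ E) :
    Nonempty (F →ₗᵢ[ℝ] E) := by
  let c := stdOrthonormalBasis ℝ F
  let b := stdOrthonormalBasis ℝ E
  let f := c.toBasis.constr ℝ (b ∘ Fin.castLE h)
  have hf : Orthonormal ℝ (f ∘ c.toBasis) := by
    convert b.orthonormal.comp _ (Fin.castLE_injective h)
    ext
    simp [f]
  exact ⟨f.isometryOfOrthonormal (c.coe_toBasis.symm ▸ c.orthonormal) hf⟩

lemma LinearIsometry.trace_comp_comp_adjoint (L : F →ₗᵢ[ℝ] E) (S : F →ₗ[ℝ] F) :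
    LinearMap.trace ℝ E (L.toLinearMap ∘ₗ S ∘ₗ L.toLinearMap.adjoint) = LinearMap.trace ℝ F S := by
  have hL : L.toLinearMap.adjoint ∘ₗ L.toLinearMap = LinearMap.id := by
    ext x
    refine ext_inner_right ℝ fun y => ?_
    simp
  rw [LinearMap.trace_comp_comm', LinearMap.comp_assoc, hL, LinearMap.comp_id]

lemma OrthonormalBasis.isTightFrame_smul_adjoint (b : OrthonormalBasis ι ℝ E) (L : F →ₗᵢ[ℝ] E)
    (c : ℝ) : IsTightFrame (fun i => c • L.toLinearMap.adjoint (b i)) (c ^ 2) := by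
  intro x
  simp_rw [real_inner_smul_right, LinearMap.adjoint_inner_right, mul_pow, ← mul_sum,
    b.sum_sq_inner_left, LinearIsometry.coe_toLinearMap, L.norm_map]

theorem exists_isTightFrame_inner_apply_self_eq_one (S : F →ₗ[ℝ] F)
    (hS : 0 < LinearMap.trace ℝ F S) {k : ℕ} (hk : finrank ℝ F ≤ k) :
    ∃ u : Fin k → F, (∀ i, ⟪u i, S (u i)⟫ = 1) ∧ ∃ K, 0 < K ∧ IsTightFrame u K := by
  have : Nontrivial F := by
    by_contra h
    rw [not_nontrivial_iff_subsingleton] at h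
    simp [Subsingleton.elim S 0] at hS
  have hk0 : (0 : ℝ) < k := by exact_mod_cast finrank_pos.trans_le hk
  obtain ⟨L⟩ := exists_linearIsometry_of_finrank_le
    (hk.trans_eq finrank_euclideanSpace_fin.symm)
  obtain ⟨b, hb⟩ := (EuclideanSpace.basisFun (Fin k) ℝ).exists_forall_inner_apply_eq_trace_div_card
    (L.toLinearMap ∘ₗ S ∘ₗ L.toLinearMap.adjoint)
  rw [L.trace_comp_comp_adjoint, Fintype.card_fin] at hb
  set c := √(k / LinearMap.trace ℝ F S)
  have hc : c ^ 2 = k / LinearMap.trace ℝ F S := Real.sq_sqrt (by positivity)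
  refine ⟨fun i => c • L.toLinearMap.adjoint (b i), fun i => ?_, c ^ 2, by rw [hc]; positivity,
    b.isTightFrame_smul_adjoint L c⟩
  rw [map_smul, real_inner_smul_left, real_inner_smul_right, LinearMap.adjoint_inner_left]
  have hbi := hb i
  simp only [LinearMap.coe_comp, Function.comp_apply] at hbi
  rw [hbi, ← mul_assoc, ← sq, hc]
  field_simp

end FiniteDimensional

lemma inner_toEuclideanLin_diagonal_self {n : ℕ} (a : Fin n → ℝ) (x : EuclideanSpace ℝ (Fin n)) :
    ⟪x, Matrix.toEuclideanLin (Matrix.diagonal a) x⟫ = ∑ j, a j * x j ^ 2 := by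
  simp only [PiLp.inner_apply, Matrix.ofLp_toLpLin, Matrix.toLin'_apply, Matrix.mulVec_diagonal,
    RCLike.inner_apply, ringHom_apply]
  exact sum_congr rfl fun j _ => by ring

lemma trace_toEuclideanLin_diagonal {n : ℕ} (a : Fin n → ℝ) :
    LinearMap.trace ℝ _ (Matrix.toEuclideanLin (Matrix.diagonal a)) = ∑ j, a j := by
  simp [LinearMap.trace_eq_sum_inner _ (EuclideanSpace.basisFun (Fin n) ℝ),
    inner_toEuclideanLin_diagonal_self]

theorem ellipsoid_contains_tight_frame_of_length_general
    (n k : ℕ) (hnk : n ≤ k) (a : Fin n → ℝ)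
    (hr : 0 < ∑ j, a j) :
    ∃ u : Fin k → EuclideanSpace ℝ (Fin n),
      (∀ i, ∑ j, a j * (u i j) ^ 2 = 1) ∧
      ∃ K : ℝ, 0 < K ∧
        ∀ x : EuclideanSpace ℝ (Fin n),
          ∑ i, (inner ℝ x (u i) : ℝ) ^ 2 = K * ‖x‖ ^ 2 := by
  obtain ⟨u, hu, K, hK, hframe⟩ := exists_isTightFrame_inner_apply_self_eq_one
    (Matrix.toEuclideanLin (Matrix.diagonal a)) (by rwa [trace_toEuclideanLin_diagonal])
    (finrank_euclideanSpace_fin.trans_le hnk)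
  exact ⟨u, fun i => by rw [← inner_toEuclideanLin_diagonal_self, hu i], K, hK, hframe⟩

/-- For `n ≤ k` and nonnegative `a` with `∑ aⱼ > 0`, the (possibly
degenerate) ellipsoid `{x : ∑ aⱼ xⱼ² = 1}` in ℝⁿ contains a tight frame of `k` vectors. -/
theorem ellipsoid_contains_tight_frame_of_length
    (n k : ℕ) (hn : 1 ≤ n) (hnk : n ≤ k) (a : Fin n → ℝ) (ha : ∀ j, 0 ≤ a j)
    (hr : 0 < ∑ j, a j) :
    ∃ u : Fin k → EuclideanSpace ℝ (Fin n),
      (∀ i, ∑ j, a j * (u i j) ^ 2 = 1) ∧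
      ∃ K : ℝ, 0 < K ∧
        ∀ x : EuclideanSpace ℝ (Fin n),
          ∑ i, (inner ℝ x (u i) : ℝ) ^ 2 = K * ‖x‖ ^ 2 :=
  ellipsoid_contains_tight_frame_of_length_general n k hnk a hr
end

section
/- Let A be a positive bounded operator on a Hilbert space that admits a projection decomposition, i.e., A = ∑_i P_i with each P_i a self-adjoint projection and convergence in the strong operator topology. Then either A is itself a projection or ‖A‖ > 1. -/
/-!
If `‖A‖ ≤ 1`, every vector `x` in the range of some `Pᵢ` satisfies
`‖x‖² = ⟪x, Pᵢ x⟫ ≤ ⟪x, A x⟫ ≤ ‖x‖²`, and equality in this chain forces `A x = x`.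
Hence `A` fixes every `Pᵢ x`, so `A (A x) = ∑ A (Pᵢ x) = ∑ Pᵢ x = A x`.
-/

section

open RCLike
open scoped InnerProductSpace

variable {𝕜 H : Type*} [RCLike 𝕜] [NormedAddCommGroup H] [InnerProductSpace 𝕜 H]

theorem ContinuousLinearMap.apply_eq_self_of_norm_sq_le_re_inner {A : H →L[𝕜] H}
    (hA : ‖A‖ ≤ 1) {x : H} (hx : ‖x‖ ^ 2 ≤ re ⟪x, A x⟫_𝕜) : A x = x := by
  have hAx : ‖A x‖ ≤ ‖x‖ := by simpa using A.le_of_opNorm_le hA x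
  have hre : re ⟪A x, x⟫_𝕜 = re ⟪x, A x⟫_𝕜 := inner_re_symm (A x) x
  have hsq : ‖A x - x‖ ^ 2 = 0 := by
    refine le_antisymm ?_ (sq_nonneg _)
    rw [norm_sub_sq (𝕜 := 𝕜), hre]
    nlinarith [norm_nonneg (A x)]
  exact norm_sub_eq_zero_iff.mp (pow_eq_zero_iff two_ne_zero |>.mp hsq)

variable [CompleteSpace H]

theorem IsStarProjection.inner_self_apply_eq_norm_sq {p : H →L[𝕜] H}
    (hp : IsStarProjection p) (x : H) : ⟪x, p x⟫_𝕜 = (‖p x‖ ^ 2 : 𝕜) := by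
  have hpp : p (p x) = p x := DFunLike.congr_fun hp.isIdempotentElem.eq x
  calc ⟪x, p x⟫_𝕜 = ⟪x, p (p x)⟫_𝕜 := by rw [hpp]
    _ = ⟪p x, p x⟫_𝕜 := (hp.isSelfAdjoint.isSymmetric x (p x)).symm
    _ = (‖p x‖ ^ 2 : 𝕜) := inner_self_eq_norm_sq_to_K (p x)

variable {ι : Type*} {P : ι → H →L[𝕜] H} {A : H →L[𝕜] H}

theorem norm_sq_le_re_inner_of_hasSum_isStarProjection (hP : ∀ i, IsStarProjection (P i))
    (hsum : ∀ x, HasSum (fun i => P i x) (A x)) (i : ι) (x : H) :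
    ‖P i x‖ ^ 2 ≤ re ⟪x, A x⟫_𝕜 := by
  have hre : ∀ j, re ⟪x, P j x⟫_𝕜 = ‖P j x‖ ^ 2 := fun j => by
    rw [(hP j).inner_self_apply_eq_norm_sq x]
    norm_cast
  have hsum_re : HasSum (fun j => re ⟪x, P j x⟫_𝕜) (re ⟪x, A x⟫_𝕜) :=
    ((hsum x).mapL (innerSL 𝕜 x)).mapL reCLM
  simpa only [hre] using le_hasSum hsum_re i fun j _ => by
    rw [hre]
    positivity

theorem apply_apply_eq_apply_of_hasSum_isStarProjection (hP : ∀ i, IsStarProjection (P i))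
    (hsum : ∀ x, HasSum (fun i => P i x) (A x)) (hA : ‖A‖ ≤ 1) (i : ι) (x : H) :
    A (P i x) = P i x := by
  have hPP : P i (P i x) = P i x := DFunLike.congr_fun (hP i).isIdempotentElem.eq x
  refine A.apply_eq_self_of_norm_sq_le_re_inner hA ?_
  simpa only [hPP] using norm_sq_le_re_inner_of_hasSum_isStarProjection hP hsum i (P i x)

theorem isIdempotentElem_of_hasSum_isStarProjection (hP : ∀ i, IsStarProjection (P i))
    (hsum : ∀ x, HasSum (fun i => P i x) (A x)) (hA : ‖A‖ ≤ 1) : IsIdempotentElem A := by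
  ext x
  have hAA : HasSum (fun i => P i x) (A (A x)) := by
    simpa only [apply_apply_eq_apply_of_hasSum_isStarProjection hP hsum hA] using
      (hsum x).mapL A
  exact hAA.unique (hsum x)

end

theorem projection_or_norm_gt_one_of_projection_decomposition_general
    {𝕜 H : Type*} [RCLike 𝕜] [NormedAddCommGroup H] [InnerProductSpace 𝕜 H]
    [CompleteSpace H]
    (A : H →L[𝕜] H) (hA : A.IsPositive)
    {ι : Type*} (P : ι → (H →L[𝕜] H))
    (hproj : ∀ i, IsSelfAdjoint (P i) ∧ (P i) ∘L (P i) = P i)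
    (hsum : ∀ x : H, HasSum (fun i => P i x) (A x)) :
    (IsSelfAdjoint A ∧ A ∘L A = A) ∨ 1 < ‖A‖ := by
  rcases le_or_gt ‖A‖ 1 with hle | hgt
  · have hP : ∀ i, IsStarProjection (P i) := fun i => ⟨(hproj i).2, (hproj i).1⟩
    exact Or.inl ⟨hA.isSelfAdjoint, isIdempotentElem_of_hasSum_isStarProjection hP hsum hle⟩
  · exact Or.inr hgt

/-- A positive operator admitting a projection decomposition (a strongly
convergent sum of self-adjoint projections) is either itself a projection or has
norm `> 1`. -/
theorem projection_or_norm_gt_one_of_projection_decomposition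
    {𝕜 H : Type*} [RCLike 𝕜] [NormedAddCommGroup H] [InnerProductSpace 𝕜 H]
    [CompleteSpace H] [TopologicalSpace.SeparableSpace H]
    (A : H →L[𝕜] H) (hA : A.IsPositive)
    {ι : Type*} [Countable ι] (P : ι → (H →L[𝕜] H))
    (hproj : ∀ i, IsSelfAdjoint (P i) ∧ (P i) ∘L (P i) = P i)
    (hsum : ∀ x : H, HasSum (fun i => P i x) (A x)) :
    (IsSelfAdjoint A ∧ A ∘L A = A) ∨ 1 < ‖A‖ :=
  projection_or_norm_gt_one_of_projection_decomposition_general A hA P hproj hsum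
end

section
/- Let A = ∑_i P_i be a positive operator written as a strongly convergent sum of self-adjoint projections, with ‖A‖ ≤ 1. Then the projections are mutually orthogonal: P_i P_j = 0 for all i ≠ j. -/
/-!
For `x` in the range of `P j`,
`‖x‖² = ‖P j x‖² ≤ ∑ₖ ‖P k x‖² = re ⟪A x, x⟫ ≤ ‖A‖ ‖x‖² ≤ ‖x‖²`,
so every other term `‖P i x‖²` of the sum vanishes.
-/

open RCLike
open scoped InnerProductSpace

theorem HasSum.eq_zero_of_le_apply {ι α : Type*} [AddCommMonoid α] [PartialOrder α]
    [IsOrderedCancelAddMonoid α] [TopologicalSpace α] [OrderClosedTopology α]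
    {f : ι → α} {a : α} (hf : HasSum f a) (hf₀ : ∀ k, 0 ≤ f k) {i j : ι} (hi : a ≤ f i)
    (hji : j ≠ i) : f j = 0 := by
  classical
  have hpair : f i + f j ≤ a := by
    simpa [Finset.sum_pair hji.symm] using sum_le_hasSum {i, j} (fun k _ => hf₀ k) hf
  exact le_antisymm (le_of_add_le_add_left (hpair.trans (hi.trans (add_zero (f i)).ge))) (hf₀ j)

section InnerProductSpace

variable {𝕜 H : Type*} [RCLike 𝕜] [NormedAddCommGroup H] [InnerProductSpace 𝕜 H]

theorem LinearMap.IsSymmetricProjection.re_inner_apply_self {p : H →ₗ[𝕜] H}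
    (hp : p.IsSymmetricProjection) (x : H) : re ⟪p x, x⟫_𝕜 = ‖p x‖ ^ 2 := by
  conv_lhs => rw [← hp.isIdempotentElem]
  rw [Module.End.mul_apply, hp.isSymmetric]
  exact inner_self_eq_norm_sq _

theorem LinearMap.IsSymmetricProjection.hasSum_norm_sq {ι : Type*} {p : ι → H →ₗ[𝕜] H}
    (hp : ∀ i, (p i).IsSymmetricProjection) {x y : H} (h : HasSum (fun i => p i x) y) :
    HasSum (fun i => ‖p i x‖ ^ 2) (re ⟪y, x⟫_𝕜) := by
  simpa only [innerSL_apply_apply, reCLM_apply, inner_re_symm x, (hp _).re_inner_apply_self]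
    using (h.mapL (innerSL 𝕜 x)).mapL reCLM

theorem ContinuousLinearMap.re_inner_apply_self_le (A : H →L[𝕜] H) (x : H) :
    re ⟪A x, x⟫_𝕜 ≤ ‖A‖ * ‖x‖ ^ 2 :=
  calc re ⟪A x, x⟫_𝕜 ≤ ‖A x‖ * ‖x‖ := re_inner_le_norm _ _
    _ ≤ ‖A‖ * ‖x‖ * ‖x‖ := by gcongr; exact A.le_opNorm x
    _ = ‖A‖ * ‖x‖ ^ 2 := by ring

end InnerProductSpace

theorem projections_mutually_orthogonal_of_sum_norm_le_one_general
    {𝕜 H : Type*} [RCLike 𝕜] [NormedAddCommGroup H] [InnerProductSpace 𝕜 H]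
    [CompleteSpace H]
    (A : H →L[𝕜] H) (hnorm : ‖A‖ ≤ 1)
    {ι : Type*} (P : ι → (H →L[𝕜] H))
    (hproj : ∀ i, IsSelfAdjoint (P i) ∧ (P i) ∘L (P i) = P i)
    (hsum : ∀ x : H, HasSum (fun i => P i x) (A x)) :
    ∀ i j, i ≠ j → (P i) ∘L (P j) = 0 := by
  have hP : ∀ k, (P k : H →ₗ[𝕜] H).IsSymmetricProjection := fun k =>
    ContinuousLinearMap.isStarProjection_iff_isSymmetricProjection.mp ⟨(hproj k).2, (hproj k).1⟩
  intro i j hij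
  ext y
  set x := P j y
  have hx : P j x = x := congr($((hproj j).2) y)
  have hle : re ⟪A x, x⟫_𝕜 ≤ ‖P j x‖ ^ 2 :=
    calc re ⟪A x, x⟫_𝕜 ≤ ‖A‖ * ‖x‖ ^ 2 := A.re_inner_apply_self_le x
      _ ≤ ‖x‖ ^ 2 := mul_le_of_le_one_left (sq_nonneg _) hnorm
      _ = ‖P j x‖ ^ 2 := by rw [hx]
  have hi : ‖P i x‖ ^ 2 = 0 :=
    (LinearMap.IsSymmetricProjection.hasSum_norm_sq hP (hsum x)).eq_zero_of_le_apply
      (fun _ => sq_nonneg _) hle hij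
  simpa using hi

/-- If a positive operator `A` with `‖A‖ ≤ 1` is a strongly convergent sum
of self-adjoint projections, then those projections are mutually orthogonal. -/
theorem projections_mutually_orthogonal_of_sum_norm_le_one
    {𝕜 H : Type*} [RCLike 𝕜] [NormedAddCommGroup H] [InnerProductSpace 𝕜 H]
    [CompleteSpace H] [TopologicalSpace.SeparableSpace H]
    (A : H →L[𝕜] H) (hA : A.IsPositive) (hnorm : ‖A‖ ≤ 1)
    {ι : Type*} [Countable ι] (P : ι → (H →L[𝕜] H))
    (hproj : ∀ i, IsSelfAdjoint (P i) ∧ (P i) ∘L (P i) = P i)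
    (hsum : ∀ x : H, HasSum (fun i => P i x) (A x)) :
    ∀ i j, i ≠ j → (P i) ∘L (P j) = 0 :=
  projections_mutually_orthogonal_of_sum_norm_le_one_general A hnorm P hproj hsum
end

section
/- For every n × n real symmetric matrix B there exists an orthonormal basis u_1,...,u_n of ℝ^n such that ⟨B u_i, u_i⟩ = trace(B)/n for every i. -/
/-!
Pick a unit vector `u` with `⟪u, T u⟫ = tr T / n`: the values `⟪bᵢ, T bᵢ⟫` on an orthonormal
basis average to `tr T / n`, and for `n ≥ 2` the values of `x ↦ ⟪x, T x⟫` on the connected unit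
sphere form an interval. The compression of `T` to `u^⊥` then has trace `(n - 1) tr T / n`, so
induction on the dimension supplies the remaining `n - 1` basis vectors.
-/

open Module Metric
open scoped InnerProductSpace

section RCLike

variable {𝕜 E : Type*} [RCLike 𝕜] [NormedAddCommGroup E] [InnerProductSpace 𝕜 E]

namespace LinearMap

noncomputable def compression (K : Submodule 𝕜 E) [K.HasOrthogonalProjection] (T : E →ₗ[𝕜] E) :
    K →ₗ[𝕜] K :=
  (K.orthogonalProjectionOnto : E →ₗ[𝕜] K) ∘ₗ T ∘ₗ K.subtype

lemma inner_compression (K : Submodule 𝕜 E) [K.HasOrthogonalProjection] (T : E →ₗ[𝕜] E)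
    (x y : K) : ⟪x, T.compression K y⟫_𝕜 = ⟪(x : E), T y⟫_𝕜 :=
  K.inner_orthogonalProjectionOnto_eq_of_mem_left x (T y)

end LinearMap

namespace OrthonormalBasis

variable {u : E} {m : ℕ}

lemma orthonormal_cons_orthogonal (hu : ‖u‖ = 1) (v : OrthonormalBasis (Fin m) 𝕜 (𝕜 ∙ u)ᗮ) :
    Orthonormal 𝕜 (Fin.cons u fun j => (v j : E) : Fin (m + 1) → E) :=
  orthonormal_vecCons_iff.mpr ⟨hu, fun j => Submodule.mem_orthogonal_singleton_iff_inner_right.mp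
    (v j).2, v.orthonormal.comp_linearIsometry (𝕜 ∙ u)ᗮ.subtypeₗᵢ⟩

variable [FiniteDimensional 𝕜 E]

lemma finrank_eq_succ_of_orthogonal (hu : ‖u‖ = 1) (v : OrthonormalBasis (Fin m) 𝕜 (𝕜 ∙ u)ᗮ) :
    finrank 𝕜 E = m + 1 := by
  have hu₀ : u ≠ 0 := by rintro rfl; simp at hu
  rw [← (𝕜 ∙ u).finrank_add_finrank_orthogonal, finrank_span_singleton hu₀,
    finrank_eq_card_basis v.toBasis, Fintype.card_fin, add_comm]

noncomputable def consOrthogonal (hu : ‖u‖ = 1) (v : OrthonormalBasis (Fin m) 𝕜 (𝕜 ∙ u)ᗮ) :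
    OrthonormalBasis (Fin (m + 1)) 𝕜 E :=
  OrthonormalBasis.mk (orthonormal_cons_orthogonal hu v)
    ((orthonormal_cons_orthogonal hu v).linearIndependent.span_eq_top_of_card_eq_finrank
      (by rw [Fintype.card_fin, finrank_eq_succ_of_orthogonal hu v])).ge

@[simp]
lemma coe_consOrthogonal (hu : ‖u‖ = 1) (v : OrthonormalBasis (Fin m) 𝕜 (𝕜 ∙ u)ᗮ) :
    ⇑(consOrthogonal hu v) = Fin.cons u fun j => (v j : E) :=
  OrthonormalBasis.coe_mk _ _

end OrthonormalBasis

lemma LinearMap.trace_eq_inner_add_trace_compression [FiniteDimensional 𝕜 E] {u : E}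
    (hu : ‖u‖ = 1) (T : E →ₗ[𝕜] E) :
    trace 𝕜 E T = ⟪u, T u⟫_𝕜 + trace 𝕜 _ (T.compression (𝕜 ∙ u)ᗮ) := by
  let v := stdOrthonormalBasis 𝕜 (𝕜 ∙ u)ᗮ
  rw [trace_eq_sum_inner T (OrthonormalBasis.consOrthogonal hu v),
    trace_eq_sum_inner _ v, Fin.sum_univ_succ]
  simp only [OrthonormalBasis.coe_consOrthogonal, Fin.cons_zero, Fin.cons_succ, add_right_inj]
  exact Fintype.sum_congr _ _ fun j => (inner_compression _ T _ _).symm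

end RCLike

namespace LinearMap

variable {E : Type*} [NormedAddCommGroup E] [InnerProductSpace ℝ E] [FiniteDimensional ℝ E]

lemma convex_inner_image_sphere (hE : 1 < finrank ℝ E) (T : E →ₗ[ℝ] E) :
    Convex ℝ ((fun x => ⟪x, T x⟫_ℝ) '' sphere 0 1) := by
  have hrank : 1 < Module.rank ℝ E := by rw [← finrank_eq_rank]; exact_mod_cast hE
  have hcont : Continuous fun x => ⟪x, T x⟫_ℝ :=
    continuous_id.inner T.continuous_of_finiteDimensional
  exact (isPreconnected_iff_ordConnected.mp
    ((isConnected_sphere hrank 0 zero_le_one).isPreconnected.image _ hcont.continuousOn)).convex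

lemma exists_norm_eq_one_inner_eq_trace_div_finrank (hE : 0 < finrank ℝ E) (T : E →ₗ[ℝ] E) :
    ∃ u : E, ‖u‖ = 1 ∧ ⟪u, T u⟫_ℝ = trace ℝ E T / finrank ℝ E := by
  let b := stdOrthonormalBasis ℝ E
  rcases Nat.lt_or_eq_of_le hE with hE₂ | hE₁
  · have hw : ∑ _i : Fin (finrank ℝ E), ((finrank ℝ E : ℝ))⁻¹ = 1 := by
      rw [Finset.sum_const, Finset.card_univ, Fintype.card_fin, nsmul_eq_mul]
      exact mul_inv_cancel₀ (by positivity)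
    obtain ⟨u, hu, hTu⟩ := (convex_inner_image_sphere hE₂ T).sum_mem
      (fun _ _ => by positivity) hw (fun i _ => ⟨b i, by simp, rfl⟩)
    refine ⟨u, by simpa using hu, hTu.trans ?_⟩
    rw [trace_eq_sum_inner T b, Finset.sum_div]
    simp [div_eq_inv_mul]
  · have : Subsingleton (Fin (finrank ℝ E)) := Fin.subsingleton_iff_le_one.mpr hE₁.ge
    let i₀ : Fin (finrank ℝ E) := ⟨0, by omega⟩
    have hE' : (finrank ℝ E : ℝ) = 1 := by exact_mod_cast hE₁.symm
    refine ⟨b i₀, b.orthonormal.1 i₀, ?_⟩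
    rw [trace_eq_sum_inner T b, Fintype.sum_subsingleton _ i₀, hE', div_one]

theorem exists_orthonormalBasis_inner_eq_trace_div (T : E →ₗ[ℝ] E) {n : ℕ}
    (hn : finrank ℝ E = n) :
    ∃ b : OrthonormalBasis (Fin n) ℝ E, ∀ i, ⟪b i, T (b i)⟫_ℝ = trace ℝ E T / n := by
  induction n generalizing E with
  | zero => exact ⟨(stdOrthonormalBasis ℝ E).reindex (finCongr hn), fun i => i.elim0⟩
  | succ m ih =>
    obtain ⟨u, hu, hTu⟩ := exists_norm_eq_one_inner_eq_trace_div_finrank (by omega) T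
    rw [hn] at hTu
    have : Fact (finrank ℝ E = m + 1) := ⟨hn⟩
    obtain ⟨v, hv⟩ := ih (T.compression (ℝ ∙ u)ᗮ)
      (Submodule.finrank_orthogonal_span_singleton (by rintro rfl; simp at hu))
    have htr : trace ℝ _ (T.compression (ℝ ∙ u)ᗮ) = trace ℝ E T - trace ℝ E T / (m + 1 : ℕ) := by
      linarith [trace_eq_inner_add_trace_compression hu T]
    refine ⟨OrthonormalBasis.consOrthogonal hu v, Fin.cases ?_ fun j => ?_⟩
    · simpa using hTu
    · have hm : (m : ℝ) ≠ 0 := Nat.cast_ne_zero.mpr (Fin.pos j).ne'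
      have hvj := hv j
      rw [inner_compression, htr] at hvj
      simp only [OrthonormalBasis.coe_consOrthogonal, Fin.cons_succ, hvj]
      push_cast
      field_simp
      ring

end LinearMap

theorem Matrix.trace_toEuclideanLin {n : Type*} [Fintype n] [DecidableEq n] (B : Matrix n n ℝ) :
    LinearMap.trace ℝ _ (Matrix.toEuclideanLin B) = B.trace := by
  rw [Matrix.toEuclideanLin_eq_toLin_orthonormal, Matrix.trace_toLin_eq]

theorem exists_orthonormal_basis_equal_diagonal_general
    (n : ℕ) (B : Matrix (Fin n) (Fin n) ℝ) :
    ∃ u : Fin n → EuclideanSpace ℝ (Fin n),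
      Orthonormal ℝ u ∧
      Submodule.span ℝ (Set.range u) = ⊤ ∧
      ∀ i, (inner ℝ (Matrix.toEuclideanLin B (u i)) (u i) : ℝ) = B.trace / n := by
  obtain ⟨b, hb⟩ :=
    (Matrix.toEuclideanLin B).exists_orthonormalBasis_inner_eq_trace_div finrank_euclideanSpace_fin
  refine ⟨b, b.orthonormal, by simpa using b.toBasis.span_eq, fun i => ?_⟩
  rw [real_inner_comm, hb i, Matrix.trace_toEuclideanLin]

/-- For every real symmetric `n × n` matrix `B` there is an orthonormal
basis `u₁,…,uₙ` of ℝⁿ with all diagonal entries `⟨B uᵢ, uᵢ⟩` equal to `trace B / n`. -/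
theorem exists_orthonormal_basis_equal_diagonal
    (n : ℕ) (hn : 0 < n) (B : Matrix (Fin n) (Fin n) ℝ) (hB : B.IsSymm) :
    ∃ u : Fin n → EuclideanSpace ℝ (Fin n),
      Orthonormal ℝ u ∧
      Submodule.span ℝ (Set.range u) = ⊤ ∧
      ∀ i, (inner ℝ (Matrix.toEuclideanLin B (u i)) (u i) : ℝ) = B.trace / n :=
  exists_orthonormal_basis_equal_diagonal_general n B
end
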